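/- Let d_i, s_i, a_i denote respectively the number of isomorphism classes of i-bisectable trees, of symmetric i-bisectable trees (those admitting an automorphism exchanging their two (i-1)-bisectable halves), and of asymmetric ones, so d_i = a_i + s_i. Then s_i = 2^{i-1} a_{i-1} + 2^{i-2} s_{i-1} and a_i = C(s_i, 2), the number of unordered pairs of distinct choices; with these recurrences, d_4 = 136. -/

import Mathlib

/-- The tree (graph) formed by connecting a graph `G₁` on `V₁` and a graph `G₂` on `V₂`
by a single edge joining the vertex `u : V₁` to the vertex `v : V₂`. -/
def joinGraph {V₁ V₂ : Type} (G₁ : SimpleGraph V₁) (G₂ : SimpleGraph V₂) (u : V₁) (v : V₂) :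
    SimpleGraph (V₁ ⊕ V₂) where
  Adj x y :=
    match x, y with
    | Sum.inl a, Sum.inl b => G₁.Adj a b
    | Sum.inr a, Sum.inr b => G₂.Adj a b
    | Sum.inl a, Sum.inr b => a = u ∧ b = v
    | Sum.inr a, Sum.inl b => a = v ∧ b = u
  symm := ⟨by
    rintro (a | a) (b | b) h
    · exact h.symm
    · exact ⟨h.2, h.1⟩
    · exact ⟨h.2, h.1⟩
    · exact h.symm⟩
  loopless := ⟨by
    rintro (a | a) h
    · exact G₁.irrefl h
    · exact G₂.irrefl h⟩

/-- A `0`-bisectable tree is a tree with a single vertex; an `(i+1)`-bisectable tree is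
formed by connecting two `i`-bisectable trees by a single edge joining any vertex of one
to any vertex of the other. -/
def IsBisectable : (i : ℕ) → {V : Type} → [Fintype V] → SimpleGraph V → Prop
  | 0, V, _, _ => Fintype.card V = 1
  | (i + 1), _, _, G =>
      ∃ (V₁ V₂ : Type) (h₁ : Fintype V₁) (h₂ : Fintype V₂)
        (G₁ : SimpleGraph V₁) (G₂ : SimpleGraph V₂) (u : V₁) (v : V₂)
        (e : _ ≃ (V₁ ⊕ V₂)),
        (∀ x y, G.Adj x y ↔ (joinGraph G₁ G₂ u v).Adj (e x) (e y)) ∧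
        (@IsBisectable i V₁ h₁ G₁) ∧ (@IsBisectable i V₂ h₂ G₂)


/-- An `i`-bisectable tree (for `i ≥ 1`) is *symmetric* if it admits an automorphism
exchanging its two `(i-1)`-bisectable halves. -/
def IsSymmetricBisectable : (i : ℕ) → {V : Type} → [Fintype V] → SimpleGraph V → Prop
  | 0, _, _, _ => False
  | (i + 1), _, _, G =>
      ∃ (V₁ V₂ : Type) (h₁ : Fintype V₁) (h₂ : Fintype V₂)
        (G₁ : SimpleGraph V₁) (G₂ : SimpleGraph V₂) (u : V₁) (v : V₂)
        (e : _ ≃ (V₁ ⊕ V₂)),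
        (∀ x y, G.Adj x y ↔ (joinGraph G₁ G₂ u v).Adj (e x) (e y)) ∧
        (@IsBisectable i V₁ h₁ G₁) ∧ (@IsBisectable i V₂ h₂ G₂) ∧
        ∃ φ : G ≃g G, ∀ x, (e (φ x)).isLeft = (e x).isRight

/-- The setoid identifying isomorphic graphs within a family of graphs on `Fin (2^i)`
singled out by a predicate `P`. -/
def graphIsoSetoid (i : ℕ) (P : SimpleGraph (Fin (2 ^ i)) → Prop) :
    Setoid {G : SimpleGraph (Fin (2 ^ i)) // P G} where
  r X Y := Nonempty (X.1 ≃g Y.1)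
  iseqv := ⟨fun X => ⟨(SimpleGraph.Iso.refl : X.1 ≃g X.1)⟩, fun ⟨e⟩ => ⟨e.symm⟩,
    fun ⟨e⟩ ⟨f⟩ => ⟨e.trans f⟩⟩

/-- `d_i`: the number of isomorphism classes of `i`-bisectable trees. -/
noncomputable def dCount (i : ℕ) : ℕ :=
  Nat.card (Quotient (graphIsoSetoid i (fun G => IsBisectable i G)))

/-- `s_i`: the number of isomorphism classes of symmetric `i`-bisectable trees. -/
noncomputable def sCount (i : ℕ) : ℕ :=
  Nat.card (Quotient (graphIsoSetoid i
    (fun G => IsBisectable i G ∧ IsSymmetricBisectable i G)))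

/-- `a_i`: the number of isomorphism classes of asymmetric `i`-bisectable trees. -/
noncomputable def aCount (i : ℕ) : ℕ :=
  Nat.card (Quotient (graphIsoSetoid i
    (fun G => IsBisectable i G ∧ ¬ IsSymmetricBisectable i G)))

open Sum SimpleGraph

section Aux

variable {V : Type} [Fintype V] {i : ℕ} {G : SimpleGraph V}

/-- A witness that `G` decomposes as a join of two `i`-bisectable halves. -/
structure Bisec {V : Type} [Fintype V] (i : ℕ) (G : SimpleGraph V) where
  V₁ : Type
  V₂ : Type
  h₁ : Fintype V₁
  h₂ : Fintype V₂
  G₁ : SimpleGraph V₁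
  G₂ : SimpleGraph V₂
  u : V₁
  v : V₂
  e : V ≃ V₁ ⊕ V₂
  he : ∀ x y, G.Adj x y ↔ (joinGraph G₁ G₂ u v).Adj (e x) (e y)
  b₁ : @IsBisectable i V₁ h₁ G₁
  b₂ : @IsBisectable i V₂ h₂ G₂

theorem isBisectable_succ_iff : IsBisectable (i + 1) G ↔ Nonempty (Bisec i G) := by
  constructor
  · rintro ⟨V₁, V₂, h₁, h₂, G₁, G₂, u, v, e, he, b₁, b₂⟩
    exact ⟨⟨V₁, V₂, h₁, h₂, G₁, G₂, u, v, e, he, b₁, b₂⟩⟩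
  · rintro ⟨⟨V₁, V₂, h₁, h₂, G₁, G₂, u, v, e, he, b₁, b₂⟩⟩
    exact ⟨V₁, V₂, h₁, h₂, G₁, G₂, u, v, e, he, b₁, b₂⟩

namespace Bisec

variable (B : Bisec i G)

/-- The left half, as a set of vertices of `G`. -/
def P : Set V := {x | (B.e x).isLeft}

/-- The left endpoint of the joining edge. -/
def a : V := B.e.symm (inl B.u)

/-- The right endpoint of the joining edge. -/
def b : V := B.e.symm (inr B.v)

theorem mem_P_iff {x : V} : x ∈ B.P ↔ (B.e x).isLeft := Iff.rfl

theorem a_mem_P : B.a ∈ B.P := by simp [P, a]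

theorem b_not_mem_P : B.b ∉ B.P := by simp [P, b]

theorem adj_a_b : G.Adj B.a B.b := by
  rw [B.he]; simp only [a, b, Equiv.apply_symm_apply]
  show B.u = B.u ∧ B.v = B.v
  exact ⟨rfl, rfl⟩

theorem adj_cross {x y : V} (hadj : G.Adj x y) (hx : x ∈ B.P) (hy : y ∉ B.P) :
    x = B.a ∧ y = B.b := by
  rw [B.he] at hadj
  rw [mem_P_iff] at hx hy
  rcases hp : B.e x with px | px <;> rcases hq : B.e y with qy | qy <;>
    rw [hp] at hx <;> rw [hq] at hy <;> rw [hp, hq] at hadj <;> simp at hx hy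
  obtain ⟨h1, h2⟩ : px = B.u ∧ qy = B.v := hadj
  constructor
  · rw [a, ← h1, ← hp, Equiv.symm_apply_apply]
  · rw [b, ← h2, ← hq, Equiv.symm_apply_apply]

/-- The same decomposition with the two halves exchanged. -/
def flip : Bisec i G where
  V₁ := B.V₂
  V₂ := B.V₁
  h₁ := B.h₂
  h₂ := B.h₁
  G₁ := B.G₂
  G₂ := B.G₁
  u := B.v
  v := B.u
  e := B.e.trans (Equiv.sumComm _ _)
  he := by
    intro x y
    rw [B.he]
    show (joinGraph B.G₁ B.G₂ B.u B.v).Adj (B.e x) (B.e y) ↔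
      (joinGraph B.G₂ B.G₁ B.v B.u).Adj (B.e x).swap (B.e y).swap
    rcases B.e x with px | px <;> rcases B.e y with qy | qy <;> exact Iff.rfl
  b₁ := B.b₂
  b₂ := B.b₁

theorem flip_a : B.flip.a = B.b := rfl

theorem flip_b : B.flip.b = B.a := rfl

theorem mem_flip_P {x : V} : x ∈ B.flip.P ↔ x ∉ B.P := by
  show ((B.e x).swap).isLeft = true ↔ ¬((B.e x).isLeft = true)
  rcases B.e x with p | p <;> simp

end Bisec

end Aux
section Aux2

variable {V : Type} [Fintype V] {i : ℕ} {G : SimpleGraph V}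

theorem isBisectable_card :
    ∀ (i : ℕ) {V : Type} [Fintype V] (G : SimpleGraph V), IsBisectable i G →
      Fintype.card V = 2 ^ i := by
  intro i
  induction i with
  | zero => intro V _ G h; exact h
  | succ i ih =>
    intro V _ G h
    obtain ⟨B⟩ := isBisectable_succ_iff.mp h
    letI := B.h₁; letI := B.h₂
    have c1 := ih B.G₁ B.b₁
    have c2 := ih B.G₂ B.b₂
    rw [Fintype.card_congr B.e, Fintype.card_sum, c1, c2]
    ring

namespace Bisec

variable (B : Bisec i G)

/-- The left part of `B` is equivalent to `V₁`. -/
noncomputable def leftEquiv : {x : V // x ∈ B.P} ≃ B.V₁ where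
  toFun x := (B.e x.1).getLeft x.2
  invFun w := ⟨B.e.symm (inl w), by simp [P]⟩
  left_inv x := by
    ext
    show B.e.symm (inl ((B.e x.1).getLeft x.2)) = x.1
    exact (congrArg B.e.symm (Sum.inl_getLeft _ _)).trans (Equiv.symm_apply_apply _ _)
  right_inv w := by
    show ((B.e (B.e.symm (inl w))).getLeft _) = w
    simp

/-- The right part of `B` is equivalent to `V₂`. -/
noncomputable def rightEquiv : {x : V // x ∉ B.P} ≃ B.V₂ where
  toFun x := (B.e x.1).getRight (by
    have := x.2; rw [mem_P_iff] at this
    exact Sum.not_isLeft.mp this)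
  invFun w := ⟨B.e.symm (inr w), by simp [P]⟩
  left_inv x := by
    ext
    show B.e.symm (inr ((B.e x.1).getRight _)) = x.1
    rw [Sum.inr_getRight, Equiv.symm_apply_apply]
  right_inv w := by
    show ((B.e (B.e.symm (inr w))).getRight _) = w
    simp

theorem ncard_P : B.P.ncard = 2 ^ i := by
  letI := B.h₁
  rw [← Nat.card_coe_set_eq, Nat.card_congr B.leftEquiv, Nat.card_eq_fintype_card]
  exact isBisectable_card i B.G₁ B.b₁

theorem ncard_compl_P : (B.Pᶜ : Set V).ncard = 2 ^ i := by
  letI := B.h₂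
  rw [← Nat.card_coe_set_eq]
  have h2 : Nat.card (B.Pᶜ : Set V) = Nat.card {x : V // x ∉ B.P} := rfl
  rw [h2, Nat.card_congr B.rightEquiv, Nat.card_eq_fintype_card]
  exact isBisectable_card i B.G₂ B.b₂

end Bisec

theorem joinGraph_connected {V₁ V₂ : Type} {G₁ : SimpleGraph V₁} {G₂ : SimpleGraph V₂}
    {u : V₁} {v : V₂} (h₁ : G₁.Connected) (h₂ : G₂.Connected) :
    (joinGraph G₁ G₂ u v).Connected := by
  rw [SimpleGraph.connected_iff_exists_forall_reachable]
  refine ⟨inl u, ?_⟩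
  rintro (x | x)
  · exact SimpleGraph.Reachable.map (⟨inl, fun h => h⟩ : G₁ →g joinGraph G₁ G₂ u v)
      (h₁.preconnected u x)
  · refine (((show (joinGraph G₁ G₂ u v).Adj (inl u) (inr v) from ⟨rfl, rfl⟩)).reachable).trans ?_
    exact SimpleGraph.Reachable.map (⟨inr, fun h => h⟩ : G₂ →g joinGraph G₁ G₂ u v)
      (h₂.preconnected v x)

/-- The isomorphism from `G` to the join graph. -/
def Bisec.iso (B : Bisec i G) : G ≃g joinGraph B.G₁ B.G₂ B.u B.v :=
  ⟨B.e, fun {x y} => (B.he x y).symm⟩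

theorem isBisectable_connected :
    ∀ (i : ℕ) {V : Type} [Fintype V] (G : SimpleGraph V), IsBisectable i G → G.Connected := by
  intro i
  induction i with
  | zero =>
    intro V _ G h
    rcases Fintype.card_eq_one_iff.mp h with ⟨x, hx⟩
    rw [SimpleGraph.connected_iff_exists_forall_reachable]
    exact ⟨x, fun w => by rw [hx w]⟩
  | succ i ih =>
    intro V _ G h
    obtain ⟨B⟩ := isBisectable_succ_iff.mp h
    letI := B.h₁; letI := B.h₂
    exact B.iso.connected_iff.mpr (joinGraph_connected (ih B.G₁ B.b₁) (ih B.G₂ B.b₂))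

namespace Bisec

variable (B : Bisec i G)

/-- The homomorphism embedding the left half into `G` minus some edges that avoid it. -/
def homLeft (s : Set (Sym2 V)) (hs : ∀ x y : V, x ∈ B.P → y ∈ B.P → s(x, y) ∉ s) :
    B.G₁ →g G.deleteEdges s where
  toFun w := B.e.symm (inl w)
  map_rel' := by
    intro w z hadj
    rw [SimpleGraph.deleteEdges_adj]
    constructor
    · rw [B.he]
      simp only [Equiv.apply_symm_apply]
      exact hadj
    · exact hs _ _ (by simp [P]) (by simp [P])

theorem reach_left (s : Set (Sym2 V)) (hs : ∀ x y : V, x ∈ B.P → y ∈ B.P → s(x, y) ∉ s)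
    {x : V} (hx : x ∈ B.P) : (G.deleteEdges s).Reachable B.a x := by
  letI := B.h₁
  have hc := isBisectable_connected i B.G₁ B.b₁
  obtain ⟨px, hp⟩ : ∃ w, B.e x = inl w := by
    rw [mem_P_iff] at hx
    rcases hq : B.e x with w | w
    · exact ⟨w, rfl⟩
    · rw [hq] at hx; simp at hx
  have hx' : x = B.e.symm (inl px) := by rw [← hp, Equiv.symm_apply_apply]
  have := (hc.preconnected B.u px).map (B.homLeft s hs)
  have ha : (B.homLeft s hs) B.u = B.a := rfl
  have hb : (B.homLeft s hs) px = B.e.symm (inl px) := rfl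
  rw [ha, hb] at this
  rwa [hx']

theorem reach_right (s : Set (Sym2 V)) (hs : ∀ x y : V, x ∉ B.P → y ∉ B.P → s(x, y) ∉ s)
    {x : V} (hx : x ∉ B.P) : (G.deleteEdges s).Reachable B.b x := by
  have := B.flip.reach_left s (fun x y hx hy =>
    hs x y (B.mem_flip_P.mp hx) (B.mem_flip_P.mp hy)) (B.mem_flip_P.mpr hx)
  rwa [flip_a] at this

theorem reach_side {x y : V}
    (h : (G.deleteEdges {s(B.a, B.b)}).Reachable x y) : x ∈ B.P ↔ y ∈ B.P := by
  obtain ⟨w⟩ := h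
  induction w with
  | nil => rfl
  | @cons x z y hadj p ih =>
    rw [SimpleGraph.deleteEdges_adj] at hadj
    refine Iff.trans ?_ ih
    by_cases hx : x ∈ B.P <;> by_cases hz : z ∈ B.P <;> simp [hx, hz]
    · obtain ⟨h1, h2⟩ := B.adj_cross hadj.1 hx hz
      exact absurd (by rw [h1, h2]; exact Set.mem_singleton _) hadj.2
    · obtain ⟨h1, h2⟩ := B.adj_cross hadj.1.symm hz hx
      refine absurd ?_ hadj.2
      rw [h1, h2, Sym2.eq_swap]
      exact Set.mem_singleton _

theorem reach_left_edge {x : V} (hx : x ∈ B.P) :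
    (G.deleteEdges {s(B.a, B.b)}).Reachable B.a x := by
  refine B.reach_left _ ?_ hx
  intro x' y' hx' hy' hm
  rw [Set.mem_singleton_iff, Sym2.eq_iff] at hm
  rcases hm with ⟨_, e2⟩ | ⟨e1, _⟩
  · exact B.b_not_mem_P (e2 ▸ hy')
  · exact B.b_not_mem_P (e1 ▸ hx')

theorem reach_right_edge {x : V} (hx : x ∉ B.P) :
    (G.deleteEdges {s(B.a, B.b)}).Reachable B.b x := by
  refine B.reach_right _ ?_ hx
  intro x' y' hx' hy' hm
  rw [Set.mem_singleton_iff, Sym2.eq_iff] at hm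
  rcases hm with ⟨e1, _⟩ | ⟨_, e2⟩
  · exact hx' (e1 ▸ B.a_mem_P)
  · exact hy' (e2 ▸ B.a_mem_P)

theorem not_cross_pair (C : Bisec i G) (ha : C.a ∈ B.P) (hb : C.b ∈ B.P) : False := by
  set s : Set (Sym2 V) := {s(C.a, C.b)} with hsdef
  have hsna : ∀ x y : V, x ∉ B.P → y ∉ B.P → s(x, y) ∉ s := by
    intro x y hx hy hmem
    rw [hsdef, Set.mem_singleton_iff, Sym2.eq_iff] at hmem
    rcases hmem with ⟨e1, _⟩ | ⟨e1, _⟩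
    · exact hx (e1 ▸ ha)
    · exact hx (e1 ▸ hb)
  have hPc : ∀ x : V, x ∉ B.P → (G.deleteEdges s).Reachable B.b x :=
    fun x hx => B.reach_right s hsna hx
  have hab : (G.deleteEdges s).Reachable B.b B.a := by
    refine SimpleGraph.Adj.reachable ?_
    rw [SimpleGraph.deleteEdges_adj]
    refine ⟨B.adj_a_b.symm, ?_⟩
    rw [hsdef, Set.mem_singleton_iff, Sym2.eq_iff]
    rintro (⟨e1, _⟩ | ⟨e1, _⟩)
    · exact B.b_not_mem_P (e1 ▸ ha)
    · exact B.b_not_mem_P (e1 ▸ hb)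
  by_cases hbC : B.b ∈ C.P
  · have hsub : (B.Pᶜ : Set V) ⊆ C.P := fun x hx => (C.reach_side (hPc x hx)).mp hbC
    have heq : (B.Pᶜ : Set V) = C.P := Set.eq_of_subset_of_ncard_le hsub
      (by rw [B.ncard_compl_P, C.ncard_P]) (Set.toFinite _)
    have hmem : B.a ∈ C.P := (C.reach_side hab).mp hbC
    rw [← heq] at hmem
    exact hmem B.a_mem_P
  · have hsub : (B.Pᶜ : Set V) ⊆ (C.Pᶜ : Set V) :=
      fun x hx hxc => hbC ((C.reach_side (hPc x hx)).mpr hxc)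
    have heq : (B.Pᶜ : Set V) = (C.Pᶜ : Set V) := Set.eq_of_subset_of_ncard_le hsub
      (by rw [B.ncard_compl_P, C.ncard_compl_P]) (Set.toFinite _)
    have hmem : B.a ∈ (C.Pᶜ : Set V) := fun hc => hbC ((C.reach_side hab).mpr hc)
    rw [← heq] at hmem
    exact hmem B.a_mem_P

theorem pair_eq (C : Bisec i G) :
    (C.a = B.a ∧ C.b = B.b) ∨ (C.a = B.b ∧ C.b = B.a) := by
  by_cases ha : C.a ∈ B.P <;> by_cases hb : C.b ∈ B.P
  · exact absurd (B.not_cross_pair C ha hb) id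
  · exact Or.inl (B.adj_cross C.adj_a_b ha hb)
  · obtain ⟨h1, h2⟩ := B.adj_cross C.adj_a_b.symm hb ha
    exact Or.inr ⟨h2, h1⟩
  · refine absurd (B.flip.not_cross_pair C ?_ ?_) id <;> rw [mem_flip_P] <;> assumption

theorem P_eq (C : Bisec i G) :
    (C.a = B.a ∧ C.b = B.b ∧ C.P = B.P) ∨ (C.a = B.b ∧ C.b = B.a ∧ C.P = (B.Pᶜ : Set V)) := by
  rcases B.pair_eq C with ⟨h1, h2⟩ | ⟨h1, h2⟩
  · left
    refine ⟨h1, h2, ?_⟩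
    have hedge : ({s(C.a, C.b)} : Set (Sym2 V)) = {s(B.a, B.b)} := by rw [h1, h2]
    have hP1 : C.P ⊆ B.P := by
      intro x hx
      have r := C.reach_left_edge hx
      rw [hedge] at r
      have hside := B.reach_side r
      refine hside.mp ?_
      rw [h1]
      exact B.a_mem_P
    have hP2 : (C.Pᶜ : Set V) ⊆ (B.Pᶜ : Set V) := by
      intro x hx hxB
      have r := C.reach_right_edge hx
      rw [hedge] at r
      have hside := B.reach_side r
      have hcb : C.b ∈ B.P := hside.mpr hxB
      rw [h2] at hcb
      exact B.b_not_mem_P hcb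
    ext x
    exact ⟨fun hx => hP1 hx, fun hx => by_contra fun hc => hP2 hc hx⟩
  · right
    refine ⟨h1, h2, ?_⟩
    have hedge : ({s(C.a, C.b)} : Set (Sym2 V)) = {s(B.a, B.b)} := by
      rw [h1, h2]
      exact congrArg _ (Sym2.eq_swap)
    have hP1 : C.P ⊆ (B.Pᶜ : Set V) := by
      intro x hx hxB
      have r := C.reach_left_edge hx
      rw [hedge] at r
      have hside := B.reach_side r
      have hca : C.a ∈ B.P := hside.mpr hxB
      rw [h1] at hca
      exact B.b_not_mem_P hca
    have hP2 : (C.Pᶜ : Set V) ⊆ B.P := by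
      intro x hx
      have r := C.reach_right_edge hx
      rw [hedge] at r
      have hside := B.reach_side r
      refine hside.mp ?_
      rw [h2]
      exact B.a_mem_P
    ext x
    constructor
    · exact fun hx => hP1 hx
    · intro hx
      by_contra hc
      exact hx (hP2 hc)

end Bisec

end Aux2
section Aux3

theorem bool_eq_of_iff {a b : Bool} (h : (a = true) ↔ (b = true)) : a = b := by
  cases a <;> cases b <;> simp_all

variable {A₁ A₂ B₁ B₂ : Type}

/-- Split a sum equivalence that preserves sides into its left component. -/
def sumSplitLeft (t : A₁ ⊕ A₂ ≃ B₁ ⊕ B₂) (ht : ∀ p, (t p).isLeft = p.isLeft) : A₁ ≃ B₁ where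
  toFun w := (t (inl w)).getLeft (by rw [ht]; rfl)
  invFun w := (t.symm (inl w)).getLeft (by
    have h := ht (t.symm (inl w))
    rw [Equiv.apply_symm_apply] at h
    rw [← h]; rfl)
  left_inv w := by
    apply Sum.inl_injective
    rw [Sum.inl_getLeft, Sum.inl_getLeft, Equiv.symm_apply_apply]
  right_inv w := by
    apply Sum.inl_injective
    rw [Sum.inl_getLeft, Sum.inl_getLeft, Equiv.apply_symm_apply]

theorem sumSplitLeft_spec (t : A₁ ⊕ A₂ ≃ B₁ ⊕ B₂) (ht : ∀ p, (t p).isLeft = p.isLeft)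
    (w : A₁) : inl (sumSplitLeft t ht w) = t (inl w) :=
  Sum.inl_getLeft _ _

/-- Split a sum equivalence that preserves sides into its right component. -/
def sumSplitRight (t : A₁ ⊕ A₂ ≃ B₁ ⊕ B₂) (ht : ∀ p, (t p).isLeft = p.isLeft) : A₂ ≃ B₂ where
  toFun w := (t (inr w)).getRight (by
    have h := ht (inr w)
    rcases hq : t (inr w) with q | q
    · rw [hq] at h; simp at h
    · rfl)
  invFun w := (t.symm (inr w)).getRight (by
    have h := ht (t.symm (inr w))
    rw [Equiv.apply_symm_apply] at h
    rcases hq : t.symm (inr w) with q | q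
    · rw [hq] at h; simp at h
    · rfl)
  left_inv w := by
    apply Sum.inr_injective
    rw [Sum.inr_getRight, Sum.inr_getRight, Equiv.symm_apply_apply]
  right_inv w := by
    apply Sum.inr_injective
    rw [Sum.inr_getRight, Sum.inr_getRight, Equiv.apply_symm_apply]

theorem sumSplitRight_spec (t : A₁ ⊕ A₂ ≃ B₁ ⊕ B₂) (ht : ∀ p, (t p).isLeft = p.isLeft)
    (w : A₂) : inr (sumSplitRight t ht w) = t (inr w) :=
  Sum.inr_getRight _ _

variable {V W : Type} [Fintype V] [Fintype W] {i : ℕ} {G : SimpleGraph V} {H : SimpleGraph W}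

/-- Transport a decomposition along a graph isomorphism. -/
def Bisec.congr (B : Bisec i G) (φ : H ≃g G) : Bisec i H where
  V₁ := B.V₁
  V₂ := B.V₂
  h₁ := B.h₁
  h₂ := B.h₂
  G₁ := B.G₁
  G₂ := B.G₂
  u := B.u
  v := B.v
  e := φ.toEquiv.trans B.e
  he := fun x y => Iff.trans (φ.map_adj_iff).symm (B.he (φ x) (φ y))
  b₁ := B.b₁
  b₂ := B.b₂

theorem Bisec.congr_mem_P (B : Bisec i G) (φ : H ≃g G) (x : W) :
    x ∈ (B.congr φ).P ↔ φ x ∈ B.P := Iff.rfl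

theorem Bisec.congr_a (B : Bisec i G) (φ : H ≃g G) : (B.congr φ).a = φ.symm B.a := rfl

theorem Bisec.congr_b (B : Bisec i G) (φ : H ≃g G) : (B.congr φ).b = φ.symm B.b := rfl

theorem isBisectable_congr (φ : H ≃g G) (h : IsBisectable i G) : IsBisectable i H := by
  cases i with
  | zero => rw [show IsBisectable 0 H = (Fintype.card W = 1) from rfl,
      Fintype.card_congr φ.toEquiv]; exact h
  | succ i =>
    obtain ⟨B⟩ := isBisectable_succ_iff.mp h
    exact isBisectable_succ_iff.mpr ⟨B.congr φ⟩

/-- `ψ` is an automorphism exchanging the two halves of the decomposition `B`. -/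
def Bisec.IsSwap (B : Bisec i G) (ψ : G ≃g G) : Prop := ∀ x, ψ x ∈ B.P ↔ x ∉ B.P

theorem isSymmetric_succ_iff :
    IsSymmetricBisectable (i + 1) G ↔ ∃ (B : Bisec i G) (ψ : G ≃g G), B.IsSwap ψ := by
  constructor
  · rintro ⟨V₁, V₂, h₁, h₂, G₁, G₂, u, v, e, he, b₁, b₂, φ, hφ⟩
    refine ⟨⟨V₁, V₂, h₁, h₂, G₁, G₂, u, v, e, he, b₁, b₂⟩, φ, fun x => ?_⟩
    have h := hφ x
    show (e (φ x)).isLeft = true ↔ ¬((e x).isLeft = true)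
    rw [h]
    rcases e x with p | p <;> simp
  · rintro ⟨⟨V₁, V₂, h₁, h₂, G₁, G₂, u, v, e, he, b₁, b₂⟩, ψ, hψ⟩
    refine ⟨V₁, V₂, h₁, h₂, G₁, G₂, u, v, e, he, b₁, b₂, ψ, fun x => ?_⟩
    have h := hψ x
    apply bool_eq_of_iff
    show _ ↔ ((e x).isRight = true)
    rw [show ((e (ψ x)).isLeft = true) ↔ ¬((e x).isLeft = true) from h]
    rcases e x with p | p <;> simp
  
theorem isSymmetricBisectable_congr (φ : H ≃g G) (h : IsSymmetricBisectable i G) :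
    IsSymmetricBisectable i H := by
  cases i with
  | zero => exact h.elim
  | succ i =>
    obtain ⟨B, ψ, hψ⟩ := isSymmetric_succ_iff.mp h
    refine isSymmetric_succ_iff.mpr ⟨B.congr φ, (φ.trans ψ).trans φ.symm, fun x => ?_⟩
    rw [Bisec.congr_mem_P, Bisec.congr_mem_P]
    show φ (φ.symm (ψ (φ x))) ∈ B.P ↔ ¬(φ x ∈ B.P)
    rw [RelIso.apply_symm_apply]
    exact hψ (φ x)

/-- The equivalence `V₁ ⊕ V₂ ≃ V₁ ⊕ V₂` induced by an automorphism of `G`. -/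
def Bisec.tot (B : Bisec i G) (φ : G ≃g G) : B.V₁ ⊕ B.V₂ ≃ B.V₁ ⊕ B.V₂ :=
  (B.e.symm.trans φ.toEquiv).trans B.e

theorem Bisec.tot_apply (B : Bisec i G) (φ : G ≃g G) (p : B.V₁ ⊕ B.V₂) :
    B.tot φ p = B.e (φ (B.e.symm p)) := rfl

theorem Bisec.tot_e (B : Bisec i G) (φ : G ≃g G) (y : V) :
    B.tot φ (B.e y) = B.e (φ y) := by rw [Bisec.tot_apply, Equiv.symm_apply_apply]

theorem rigid :
    ∀ (i : ℕ) {V : Type} [Fintype V] (G : SimpleGraph V), IsBisectable i G →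
      ∀ (φ : G ≃g G) (x : V), φ x = x → ∀ y, φ y = y := by
  intro i
  induction i with
  | zero =>
    intro V _ G h φ x hx y
    obtain ⟨z, hz⟩ := Fintype.card_eq_one_iff.mp h
    rw [hz y, hz (φ z), hz z]
  | succ i ih =>
    intro V _ G h φ x hx y
    obtain ⟨B⟩ := isBisectable_succ_iff.mp h
    letI := B.h₁; letI := B.h₂
    set C := B.congr φ.symm with hCdef
    have hCa : C.a = φ B.a := rfl
    have hCb : C.b = φ B.b := rfl
    have hCP : ∀ z, z ∈ C.P ↔ φ.symm z ∈ B.P := fun z => Iff.rfl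
    rcases B.P_eq C with ⟨h1, h2, h3⟩ | ⟨h1, h2, h3⟩
    · -- φ preserves the partition, hence is the identity
      have hPP : ∀ z, φ z ∈ B.P ↔ z ∈ B.P := by
        intro z
        have hz := hCP (φ z)
        rw [h3, RelIso.symm_apply_apply] at hz
        exact hz
      have ha : φ B.a = B.a := by rw [← hCa, h1]
      have hb : φ B.b = B.b := by rw [← hCb, h2]
      have ht : ∀ p, (B.tot φ p).isLeft = p.isLeft := by
        intro p
        apply bool_eq_of_iff
        rw [Bisec.tot_apply]
        conv_rhs => rw [← Equiv.apply_symm_apply B.e p]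
        exact hPP (B.e.symm p)
      set ψ₁ := sumSplitLeft (B.tot φ) ht with hψ₁def
      set ψ₂ := sumSplitRight (B.tot φ) ht with hψ₂def
      have key₁ : ∀ w, inl (ψ₁ w) = B.e (φ (B.e.symm (inl w))) := fun w => by
        rw [hψ₁def, sumSplitLeft_spec, Bisec.tot_apply]
      have key₂ : ∀ w, inr (ψ₂ w) = B.e (φ (B.e.symm (inr w))) := fun w => by
        rw [hψ₂def, sumSplitRight_spec, Bisec.tot_apply]
      have key₁' : ∀ w, B.e.symm (inl (ψ₁ w)) = φ (B.e.symm (inl w)) := fun w => by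
        rw [key₁ w, Equiv.symm_apply_apply]
      have key₂' : ∀ w, B.e.symm (inr (ψ₂ w)) = φ (B.e.symm (inr w)) := fun w => by
        rw [key₂ w, Equiv.symm_apply_apply]
      have hAdj : ∀ p q : B.V₁ ⊕ B.V₂, (joinGraph B.G₁ B.G₂ B.u B.v).Adj p q ↔
          G.Adj (B.e.symm p) (B.e.symm q) := by
        intro p q
        have h' := B.he (B.e.symm p) (B.e.symm q)
        rw [Equiv.apply_symm_apply, Equiv.apply_symm_apply] at h'
        exact h'.symm
      have adj₁ : ∀ w z : B.V₁, B.G₁.Adj (ψ₁ w) (ψ₁ z) ↔ B.G₁.Adj w z := by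
        intro w z
        show (joinGraph B.G₁ B.G₂ B.u B.v).Adj (inl (ψ₁ w)) (inl (ψ₁ z)) ↔
          (joinGraph B.G₁ B.G₂ B.u B.v).Adj (inl w) (inl z)
        rw [hAdj, hAdj, key₁', key₁', φ.map_adj_iff]
      have adj₂ : ∀ w z : B.V₂, B.G₂.Adj (ψ₂ w) (ψ₂ z) ↔ B.G₂.Adj w z := by
        intro w z
        show (joinGraph B.G₁ B.G₂ B.u B.v).Adj (inr (ψ₂ w)) (inr (ψ₂ z)) ↔
          (joinGraph B.G₁ B.G₂ B.u B.v).Adj (inr w) (inr z)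
        rw [hAdj, hAdj, key₂', key₂', φ.map_adj_iff]
      have hu : ψ₁ B.u = B.u := by
        apply Sum.inl_injective
        rw [key₁]
        show B.e (φ B.a) = inl B.u
        rw [ha]
        exact Equiv.apply_symm_apply _ _
      have hv : ψ₂ B.v = B.v := by
        apply Sum.inr_injective
        rw [key₂]
        show B.e (φ B.b) = inr B.v
        rw [hb]
        exact Equiv.apply_symm_apply _ _
      have fix₁ : ∀ w, ψ₁ w = w := fun w =>
        ih B.G₁ B.b₁ ⟨ψ₁, fun {a b} => adj₁ a b⟩ B.u hu w
      have fix₂ : ∀ w, ψ₂ w = w := fun w =>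
        ih B.G₂ B.b₂ ⟨ψ₂, fun {a b} => adj₂ a b⟩ B.v hv w
      apply B.e.injective
      rcases hq : B.e y with w | w
      · rw [← B.tot_e, hq, ← sumSplitLeft_spec (B.tot φ) ht, ← hψ₁def, fix₁]
      · rw [← B.tot_e, hq, ← sumSplitRight_spec (B.tot φ) ht, ← hψ₂def, fix₂]
    · exfalso
      have hz := hCP x
      rw [h3] at hz
      have hx' : φ.symm x = x := by
        apply φ.injective
        rw [RelIso.apply_symm_apply, hx]
      rw [hx'] at hz
      by_cases hxB : x ∈ B.P
      · exact (hz.mpr hxB) hxB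
      · exact hxB (hz.mp hxB)

end Aux3
section Aux4

variable {V : Type} [Fintype V] {i : ℕ} {G : SimpleGraph V}

theorem Bisec.adj_symm (B : Bisec i G) (p q : B.V₁ ⊕ B.V₂) :
    (joinGraph B.G₁ B.G₂ B.u B.v).Adj p q ↔ G.Adj (B.e.symm p) (B.e.symm q) := by
  have h' := B.he (B.e.symm p) (B.e.symm q)
  rw [Equiv.apply_symm_apply, Equiv.apply_symm_apply] at h'
  exact h'.symm

theorem Bisec.swap_maps (B : Bisec i G) (ψ : G ≃g G) (hsw : B.IsSwap ψ) :
    ψ B.a = B.b ∧ ψ B.b = B.a := by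
  have h1 : ψ B.a ∉ B.P := fun hc => (hsw B.a).mp hc B.a_mem_P
  have h2 : ψ B.b ∈ B.P := (hsw B.b).mpr B.b_not_mem_P
  have hadj : G.Adj (ψ B.b) (ψ B.a) := ψ.map_adj_iff.mpr B.adj_a_b.symm
  have h3 := B.adj_cross hadj h2 h1
  exact ⟨h3.2, h3.1⟩

theorem Bisec.swap_unique (B : Bisec i G) (ψ ψ' : G ≃g G) (h : B.IsSwap ψ)
    (h' : B.IsSwap ψ') : ∀ y, ψ y = ψ' y := by
  have hbi : IsBisectable (i + 1) G := isBisectable_succ_iff.mpr ⟨B⟩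
  have hfix : (ψ.trans ψ'.symm) B.a = B.a := by
    show ψ'.symm (ψ B.a) = B.a
    rw [(B.swap_maps ψ h).1]
    apply ψ'.injective
    rw [RelIso.apply_symm_apply, (B.swap_maps ψ' h').1]
  intro y
  have hy : ψ'.symm (ψ y) = y := rigid (i + 1) G hbi (ψ.trans ψ'.symm) B.a hfix y
  calc ψ y = ψ' (ψ'.symm (ψ y)) := (RelIso.apply_symm_apply _ _).symm
    _ = ψ' y := by rw [hy]

theorem Bisec.swap_or_id (B : Bisec i G) (φ : G ≃g G) :
    (∀ y, φ y = y) ∨ B.IsSwap φ := by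
  set C := B.congr φ.symm with hCdef
  have hCa : C.a = φ B.a := rfl
  have hCP : ∀ z, z ∈ C.P ↔ φ.symm z ∈ B.P := fun z => Iff.rfl
  rcases B.P_eq C with ⟨h1, _, _⟩ | ⟨_, _, h3⟩
  · left
    have ha : φ B.a = B.a := by rw [← hCa, h1]
    exact rigid (i + 1) G (isBisectable_succ_iff.mpr ⟨B⟩) φ B.a ha
  · right
    intro x
    have hz := hCP (φ x)
    rw [h3, RelIso.symm_apply_apply] at hz
    constructor
    · intro hmem hxP
      exact (hz.mpr hxP) hmem
    · intro hxP
      by_contra hc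
      exact hxP (hz.mp hc)

theorem Bisec.aut_eq_or (B : Bisec i G) (σ φ : G ≃g G) (hσ : B.IsSwap σ) :
    (∀ y, φ y = y) ∨ (∀ y, φ y = σ y) := by
  rcases B.swap_or_id φ with h | h
  · exact Or.inl h
  · exact Or.inr (B.swap_unique φ σ h hσ)

theorem Bisec.swap_ne (B : Bisec i G) (σ : G ≃g G) (hσ : B.IsSwap σ) (y : V) : σ y ≠ y := by
  intro hy
  by_cases hyP : y ∈ B.P
  · have hm : σ y ∈ B.P := by rw [hy]; exact hyP
    exact (hσ y).mp hm hyP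
  · have hm : σ y ∉ B.P := by rw [hy]; exact hyP
    exact hm ((hσ y).mpr hyP)

theorem Bisec.swap_rooted (B : Bisec i G) (ψ : G ≃g G) (hsw : B.IsSwap ψ) :
    ∃ ρ : B.G₁ ≃g B.G₂, ρ B.u = B.v := by
  set t : B.V₁ ⊕ B.V₂ ≃ B.V₂ ⊕ B.V₁ := (B.tot ψ).trans (Equiv.sumComm B.V₁ B.V₂) with htdef
  have ht : ∀ p, (t p).isLeft = p.isLeft := by
    intro p
    have hside : ((B.e (ψ (B.e.symm p))).isLeft = true) ↔ ¬(p.isLeft = true) := by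
      have h' := hsw (B.e.symm p)
      rwa [show (B.e.symm p ∈ B.P) ↔ (p.isLeft = true) from by
        rw [Bisec.mem_P_iff, Equiv.apply_symm_apply]] at h'
    have htp : t p = (B.e (ψ (B.e.symm p))).swap := rfl
    rw [htp]
    rcases hq : B.e (ψ (B.e.symm p)) with q | q <;> rw [hq] at hside <;>
      rcases p with p' | p' <;> simp_all
  set ρ := sumSplitLeft t ht with hρdef
  have key : ∀ w, B.e (ψ (B.e.symm (inl w))) = inr (ρ w) := by
    intro w
    have h1 := sumSplitLeft_spec t ht w
    have h2 : t (inl w) = (B.e (ψ (B.e.symm (inl w)))).swap := rfl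
    rw [h2] at h1
    calc B.e (ψ (B.e.symm (inl w))) = ((B.e (ψ (B.e.symm (inl w)))).swap).swap :=
          (Sum.swap_swap _).symm
      _ = (inl (ρ w)).swap := by rw [← h1]
      _ = inr (ρ w) := rfl
  have key' : ∀ w, B.e.symm (inr (ρ w)) = ψ (B.e.symm (inl w)) := fun w => by
    rw [← key w, Equiv.symm_apply_apply]
  have adj : ∀ w z : B.V₁, B.G₂.Adj (ρ w) (ρ z) ↔ B.G₁.Adj w z := by
    intro w z
    show (joinGraph B.G₁ B.G₂ B.u B.v).Adj (inr (ρ w)) (inr (ρ z)) ↔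
      (joinGraph B.G₁ B.G₂ B.u B.v).Adj (inl w) (inl z)
    rw [B.adj_symm, B.adj_symm, key', key', ψ.map_adj_iff]
  refine ⟨⟨ρ, fun {w z} => adj w z⟩, ?_⟩
  show ρ B.u = B.v
  apply Sum.inr_injective
  apply B.e.symm.injective
  rw [key']
  show ψ B.a = B.e.symm (inr B.v)
  rw [(B.swap_maps ψ hsw).1]
  rfl

theorem Bisec.rooted_swap (B : Bisec i G) (ρ : B.G₁ ≃g B.G₂) (hρ : ρ B.u = B.v) :
    ∃ ψ : G ≃g G, B.IsSwap ψ := by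
  set σ : B.V₁ ⊕ B.V₂ ≃ B.V₁ ⊕ B.V₂ :=
    (Equiv.sumCongr ρ.toEquiv ρ.toEquiv.symm).trans (Equiv.sumComm B.V₂ B.V₁) with hσdef
  have hσl : ∀ w, σ (inl w) = inr (ρ w) := fun w => rfl
  have hσr : ∀ z, σ (inr z) = inl (ρ.toEquiv.symm z) := fun z => rfl
  have hre : ∀ z : B.V₂, ρ (ρ.toEquiv.symm z) = z := fun z => Equiv.apply_symm_apply ρ.toEquiv z
  have hre' : ∀ w : B.V₁, ρ.toEquiv.symm (ρ w) = w := fun w => Equiv.symm_apply_apply ρ.toEquiv w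
  have hσadj : ∀ p q, (joinGraph B.G₁ B.G₂ B.u B.v).Adj (σ p) (σ q) ↔
      (joinGraph B.G₁ B.G₂ B.u B.v).Adj p q := by
    rintro (w | w) (z | z)
    · rw [hσl, hσl]
      exact ρ.map_adj_iff
    · rw [hσl, hσr]
      show (ρ w = B.v ∧ ρ.toEquiv.symm z = B.u) ↔ (w = B.u ∧ z = B.v)
      constructor
      · rintro ⟨e1, e2⟩
        refine ⟨ρ.injective (by rw [e1, hρ]), ?_⟩
        rw [← hρ, ← e2, hre]
      · rintro ⟨e1, e2⟩
        subst e1; subst e2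
        exact ⟨hρ, by rw [← hρ, hre']⟩
    · rw [hσl, hσr]
      show (ρ.toEquiv.symm w = B.u ∧ ρ z = B.v) ↔ (w = B.v ∧ z = B.u)
      constructor
      · rintro ⟨e1, e2⟩
        refine ⟨?_, ρ.injective (by rw [e2, hρ])⟩
        rw [← hρ, ← e1, hre]
      · rintro ⟨e1, e2⟩
        subst e1; subst e2
        exact ⟨by rw [← hρ, hre'], hρ⟩
    · rw [hσr, hσr]
      show B.G₁.Adj (ρ.toEquiv.symm w) (ρ.toEquiv.symm z) ↔ B.G₂.Adj w z
      constructor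
      · intro h
        have h2 := ρ.map_adj_iff.mpr h
        rwa [hre, hre] at h2
      · intro h
        apply ρ.map_adj_iff.mp
        rw [hre, hre]
        exact h
  set ψeq : V ≃ V := (B.e.trans σ).trans B.e.symm with hψdef
  have hcoe : ∀ x, B.e (ψeq x) = σ (B.e x) := fun x => Equiv.apply_symm_apply _ _
  have hrel : ∀ x y, G.Adj (ψeq x) (ψeq y) ↔ G.Adj x y := by
    intro x y
    rw [B.he x y, B.he (ψeq x) (ψeq y), hcoe, hcoe, hσadj]
  refine ⟨⟨ψeq, fun {x y} => hrel x y⟩, ?_⟩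
  intro x
  show (B.e (ψeq x)).isLeft = true ↔ ¬((B.e x).isLeft = true)
  rw [hcoe]
  rcases B.e x with w | w
  · rw [hσl]; simp
  · rw [hσr]; simp

theorem Bisec.symm_iff (B : Bisec i G) :
    IsSymmetricBisectable (i + 1) G ↔ ∃ ρ : B.G₁ ≃g B.G₂, ρ B.u = B.v := by
  constructor
  · intro h
    obtain ⟨C, ψ, hψ⟩ := isSymmetric_succ_iff.mp h
    have hsw : B.IsSwap ψ := by
      rcases C.P_eq B with ⟨_, _, h3⟩ | ⟨_, _, h3⟩
      · intro x
        rw [show (ψ x ∈ B.P) = (ψ x ∈ C.P) from by rw [h3],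
          show (x ∈ B.P) = (x ∈ C.P) from by rw [h3]]
        exact hψ x
      · intro x
        rw [show (ψ x ∈ B.P) = (ψ x ∈ (C.Pᶜ : Set V)) from by rw [h3],
          show (x ∈ B.P) = (x ∈ (C.Pᶜ : Set V)) from by rw [h3]]
        constructor
        · intro hmem hc
          exact hmem ((hψ x).mpr hc)
        · intro hmem hc
          exact hmem ((hψ x).mp hc)
    exact B.swap_rooted ψ hsw
  · rintro ⟨ρ, hρ⟩
    obtain ⟨ψ, hψ⟩ := B.rooted_swap ρ hρ
    exact isSymmetric_succ_iff.mpr ⟨B, ψ, hψ⟩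

end Aux4
section Aux5

/-- Rooted isomorphism of graphs with distinguished vertices. -/
def RIso {V W : Type} (G : SimpleGraph V) (H : SimpleGraph W) (x : V) (y : W) : Prop :=
  ∃ ρ : G ≃g H, ρ x = y

theorem RIso.rfl {V : Type} {G : SimpleGraph V} {x : V} : RIso G G x x := ⟨Iso.refl, _root_.rfl⟩

theorem RIso.symm {V W : Type} {G : SimpleGraph V} {H : SimpleGraph W} {x y}
    (h : RIso G H x y) : RIso H G y x := by
  obtain ⟨ρ, hρ⟩ := h
  exact ⟨ρ.symm, by rw [← hρ, RelIso.symm_apply_apply]⟩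

theorem RIso.trans {V W U : Type} {G : SimpleGraph V} {H : SimpleGraph W} {K : SimpleGraph U}
    {x y z} (h : RIso G H x y) (h' : RIso H K y z) : RIso G K x z := by
  obtain ⟨ρ, hρ⟩ := h
  obtain ⟨τ, hτ⟩ := h'
  exact ⟨ρ.trans τ, by show τ (ρ x) = z; rw [hρ, hτ]⟩

variable {V W : Type} [Fintype V] [Fintype W] {i : ℕ} {G : SimpleGraph V}

/-- Transport a graph along an equivalence of vertex types. -/
def transportGraph (G : SimpleGraph V) (c : V ≃ W) : SimpleGraph W where
  Adj x y := G.Adj (c.symm x) (c.symm y)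
  symm := ⟨fun _ _ h => G.adj_symm h⟩
  loopless := ⟨fun _ h => G.irrefl h⟩

/-- The isomorphism onto the transported graph. -/
def transportIso (G : SimpleGraph V) (c : V ≃ W) : G ≃g transportGraph G c :=
  ⟨c, by
    intro a b
    show G.Adj (c.symm (c a)) (c.symm (c b)) ↔ G.Adj a b
    rw [Equiv.symm_apply_apply, Equiv.symm_apply_apply]⟩

/-- Rooted isomorphisms glue to an isomorphism of join graphs. -/
def joinGraphIso {V₁ V₂ W₁ W₂ : Type} {G₁ : SimpleGraph V₁} {G₂ : SimpleGraph V₂}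
    {H₁ : SimpleGraph W₁} {H₂ : SimpleGraph W₂} {u : V₁} {v : V₂} {u' : W₁} {v' : W₂}
    (ρ₁ : G₁ ≃g H₁) (ρ₂ : G₂ ≃g H₂) (h₁ : ρ₁ u = u') (h₂ : ρ₂ v = v') :
    joinGraph G₁ G₂ u v ≃g joinGraph H₁ H₂ u' v' := by
  refine ⟨Equiv.sumCongr ρ₁.toEquiv ρ₂.toEquiv, ?_⟩
  rintro (a | a) (b | b)
  · exact ρ₁.map_adj_iff
  · show (ρ₁ a = u' ∧ ρ₂ b = v') ↔ (a = u ∧ b = v)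
    rw [← h₁, ← h₂]
    exact and_congr ⟨fun h => ρ₁.injective h, fun h => by rw [h]⟩
      ⟨fun h => ρ₂.injective h, fun h => by rw [h]⟩
  · show (ρ₂ a = v' ∧ ρ₁ b = u') ↔ (a = v ∧ b = u)
    rw [← h₁, ← h₂]
    exact and_congr ⟨fun h => ρ₂.injective h, fun h => by rw [h]⟩
      ⟨fun h => ρ₁.injective h, fun h => by rw [h]⟩
  · exact ρ₂.map_adj_iff

/-- Commutativity of the join construction. -/
def joinGraphComm {V₁ V₂ : Type} (G₁ : SimpleGraph V₁) (G₂ : SimpleGraph V₂)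
    (u : V₁) (v : V₂) : joinGraph G₁ G₂ u v ≃g joinGraph G₂ G₁ v u := by
  refine ⟨Equiv.sumComm V₁ V₂, ?_⟩
  rintro (a | a) (b | b) <;> exact Iff.rfl

/-- If the partitions and roots of two decompositions agree, the corresponding halves are
rooted-isomorphic. -/
theorem Bisec.aligned (B C : Bisec i G) (h1 : C.a = B.a) (hP : C.P = B.P) :
    RIso B.G₁ C.G₁ B.u C.u ∧ RIso B.G₂ C.G₂ B.v C.v := by
  have h2 : C.b = B.b := by
    have hadj : G.Adj B.a C.b := by
      rw [← h1]; exact C.adj_a_b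
    have hnb : C.b ∉ B.P := by
      rw [← hP]; exact C.b_not_mem_P
    exact (B.adj_cross hadj B.a_mem_P hnb).2
  set t : B.V₁ ⊕ B.V₂ ≃ C.V₁ ⊕ C.V₂ := B.e.symm.trans C.e with htdef
  have ht : ∀ p, (t p).isLeft = p.isLeft := by
    intro p
    apply bool_eq_of_iff
    have hmem : B.e.symm p ∈ C.P ↔ B.e.symm p ∈ B.P := by rw [hP]
    rw [Bisec.mem_P_iff, Bisec.mem_P_iff, Equiv.apply_symm_apply] at hmem
    exact hmem
  have key₁ : ∀ w, inl (sumSplitLeft t ht w) = C.e (B.e.symm (inl w)) := fun w =>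
    sumSplitLeft_spec t ht w
  have key₂ : ∀ w, inr (sumSplitRight t ht w) = C.e (B.e.symm (inr w)) := fun w =>
    sumSplitRight_spec t ht w
  have key₁' : ∀ w, C.e.symm (inl (sumSplitLeft t ht w)) = B.e.symm (inl w) := fun w => by
    rw [key₁, Equiv.symm_apply_apply]
  have key₂' : ∀ w, C.e.symm (inr (sumSplitRight t ht w)) = B.e.symm (inr w) := fun w => by
    rw [key₂, Equiv.symm_apply_apply]
  constructor
  · have adj : ∀ w z : B.V₁, C.G₁.Adj (sumSplitLeft t ht w) (sumSplitLeft t ht z) ↔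
        B.G₁.Adj w z := by
      intro w z
      show (joinGraph C.G₁ C.G₂ C.u C.v).Adj (inl (sumSplitLeft t ht w))
          (inl (sumSplitLeft t ht z)) ↔
        (joinGraph B.G₁ B.G₂ B.u B.v).Adj (inl w) (inl z)
      rw [C.adj_symm, B.adj_symm, key₁', key₁']
    refine ⟨⟨sumSplitLeft t ht, fun {w z} => adj w z⟩, ?_⟩
    show sumSplitLeft t ht B.u = C.u
    apply Sum.inl_injective
    rw [key₁]
    show C.e B.a = inl C.u
    rw [← h1]
    exact Equiv.apply_symm_apply _ _
  · have adj : ∀ w z : B.V₂, C.G₂.Adj (sumSplitRight t ht w) (sumSplitRight t ht z) ↔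
        B.G₂.Adj w z := by
      intro w z
      show (joinGraph C.G₁ C.G₂ C.u C.v).Adj (inr (sumSplitRight t ht w))
          (inr (sumSplitRight t ht z)) ↔
        (joinGraph B.G₁ B.G₂ B.u B.v).Adj (inr w) (inr z)
      rw [C.adj_symm, B.adj_symm, key₂', key₂']
    refine ⟨⟨sumSplitRight t ht, fun {w z} => adj w z⟩, ?_⟩
    show sumSplitRight t ht B.v = C.v
    apply Sum.inr_injective
    rw [key₂]
    show C.e B.b = inr C.v
    rw [← h2]
    exact Equiv.apply_symm_apply _ _

/-- The halves of any two decompositions of the same graph match up (possibly crosswise). -/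
theorem Bisec.halves (B C : Bisec i G) :
    (RIso B.G₁ C.G₁ B.u C.u ∧ RIso B.G₂ C.G₂ B.v C.v) ∨
    (RIso B.G₁ C.G₂ B.u C.v ∧ RIso B.G₂ C.G₁ B.v C.u) := by
  rcases B.P_eq C with ⟨h1, _, h3⟩ | ⟨h1, h2, h3⟩
  · exact Or.inl (B.aligned C h1 h3)
  · right
    have h1' : C.flip.a = B.a := by rw [Bisec.flip_a, h2]
    have hP' : C.flip.P = B.P := by
      ext x
      rw [C.mem_flip_P, show (x ∈ C.P) = (x ∈ (B.Pᶜ : Set V)) from by rw [h3]]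
      exact not_not
    exact B.aligned C.flip h1' hP' 

end Aux5
section Aux6

variable {V W : Type} [Fintype V] [Fintype W] {i : ℕ} {G : SimpleGraph V} {H : SimpleGraph W}

/-- Rooted bisectable graphs on `Fin (2^i)`. -/
def Rooted (i : ℕ) := {p : SimpleGraph (Fin (2 ^ i)) × Fin (2 ^ i) // IsBisectable i p.1}

/-- The setoid of rooted isomorphism. -/
def rootedSetoid (i : ℕ) : Setoid (Rooted i) where
  r X Y := RIso X.1.1 Y.1.1 X.1.2 Y.1.2
  iseqv := ⟨fun _ => RIso.rfl, fun h => h.symm, fun h h' => h.trans h'⟩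

/-- Isomorphism classes of rooted bisectable graphs. -/
def RQ (i : ℕ) := Quotient (rootedSetoid i)

noncomputable instance : Fintype (SimpleGraph (Fin (2 ^ i))) := by
  classical exact inferInstance

instance : Finite (Rooted i) := by
  unfold Rooted
  infer_instance

instance : Finite (RQ i) := Quotient.finite _

/-- Shorthand for the class of a rooted graph. -/
def rq (X : Rooted i) : RQ i := Quotient.mk (rootedSetoid i) X

theorem rq_eq_iff {X Y : Rooted i} : rq X = rq Y ↔ RIso X.1.1 Y.1.1 X.1.2 Y.1.2 := by
  constructor
  · intro h
    exact Quotient.exact h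
  · intro h
    exact Quotient.sound h

/-- The Fin-model equivalence for the left half. -/
noncomputable def Bisec.finEquiv₁ (B : Bisec i G) : B.V₁ ≃ Fin (2 ^ i) :=
  letI := B.h₁
  Fintype.equivFinOfCardEq (isBisectable_card i B.G₁ B.b₁)

noncomputable def Bisec.finEquiv₂ (B : Bisec i G) : B.V₂ ≃ Fin (2 ^ i) :=
  letI := B.h₂
  Fintype.equivFinOfCardEq (isBisectable_card i B.G₂ B.b₂)

/-- The left half of a decomposition as a rooted graph on `Fin (2^i)`. -/
noncomputable def Bisec.leftRooted (B : Bisec i G) : Rooted i :=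
  letI := B.h₁
  ⟨(transportGraph B.G₁ B.finEquiv₁, B.finEquiv₁ B.u),
    isBisectable_congr (transportIso B.G₁ B.finEquiv₁).symm B.b₁⟩

noncomputable def Bisec.rightRooted (B : Bisec i G) : Rooted i :=
  letI := B.h₂
  ⟨(transportGraph B.G₂ B.finEquiv₂, B.finEquiv₂ B.v),
    isBisectable_congr (transportIso B.G₂ B.finEquiv₂).symm B.b₂⟩

theorem Bisec.leftRooted_riso (B : Bisec i G) :
    RIso B.G₁ B.leftRooted.1.1 B.u B.leftRooted.1.2 := ⟨transportIso _ _, rfl⟩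

theorem Bisec.rightRooted_riso (B : Bisec i G) :
    RIso B.G₂ B.rightRooted.1.1 B.v B.rightRooted.1.2 := ⟨transportIso _ _, rfl⟩

theorem Bisec.left_class_exact {B : Bisec i G} {C : Bisec i H}
    (h : rq B.leftRooted = rq C.leftRooted) : RIso B.G₁ C.G₁ B.u C.u :=
  B.leftRooted_riso.trans ((rq_eq_iff.mp h).trans C.leftRooted_riso.symm)

theorem Bisec.right_class_exact {B : Bisec i G} {C : Bisec i H}
    (h : rq B.rightRooted = rq C.rightRooted) : RIso B.G₂ C.G₂ B.v C.v :=
  B.rightRooted_riso.trans ((rq_eq_iff.mp h).trans C.rightRooted_riso.symm)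

theorem Bisec.lr_class_exact {B : Bisec i G} {C : Bisec i H}
    (h : rq B.leftRooted = rq C.rightRooted) : RIso B.G₁ C.G₂ B.u C.v :=
  B.leftRooted_riso.trans ((rq_eq_iff.mp h).trans C.rightRooted_riso.symm)

theorem Bisec.rl_class_exact {B : Bisec i G} {C : Bisec i H}
    (h : rq B.rightRooted = rq C.leftRooted) : RIso B.G₂ C.G₁ B.v C.u :=
  B.rightRooted_riso.trans ((rq_eq_iff.mp h).trans C.leftRooted_riso.symm)

/-- The unordered pair of half-classes is an isomorphism invariant. -/
theorem Bisec.pair_eq_sym2 (B : Bisec i G) (C : Bisec i H) (ζ : G ≃g H) :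
    (s(rq B.leftRooted, rq B.rightRooted) : Sym2 (RQ i)) =
      s(rq C.leftRooted, rq C.rightRooted) := by
  rcases (B.congr ζ.symm).halves C with ⟨h1, h2⟩ | ⟨h1, h2⟩
  · rw [show rq B.leftRooted = rq C.leftRooted from
      rq_eq_iff.mpr (B.leftRooted_riso.symm.trans (h1.trans C.leftRooted_riso)),
      show rq B.rightRooted = rq C.rightRooted from
      rq_eq_iff.mpr (B.rightRooted_riso.symm.trans (h2.trans C.rightRooted_riso))]
  · rw [show rq B.leftRooted = rq C.rightRooted from
      rq_eq_iff.mpr (B.leftRooted_riso.symm.trans (h1.trans C.rightRooted_riso)),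
      show rq B.rightRooted = rq C.leftRooted from
      rq_eq_iff.mpr (B.rightRooted_riso.symm.trans (h2.trans C.leftRooted_riso))]
    exact Sym2.eq_swap

/-- For symmetric graphs, even the left half-class alone is an invariant. -/
theorem Bisec.left_class_eq_of_symm (B : Bisec i G) (C : Bisec i H) (ζ : G ≃g H)
    (hs : IsSymmetricBisectable (i + 1) H) : rq B.leftRooted = rq C.leftRooted := by
  rcases (B.congr ζ.symm).halves C with ⟨h1, _⟩ | ⟨h1, _⟩
  · exact rq_eq_iff.mpr (B.leftRooted_riso.symm.trans (h1.trans C.leftRooted_riso))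
  · have hCs : RIso C.G₁ C.G₂ C.u C.v := C.symm_iff.mp hs
    exact rq_eq_iff.mpr (B.leftRooted_riso.symm.trans
      ((h1.trans hCs.symm).trans C.leftRooted_riso))

theorem Bisec.left_eq_right_iff_symm (B : Bisec i G) :
    rq B.leftRooted = rq B.rightRooted ↔ IsSymmetricBisectable (i + 1) G := by
  constructor
  · intro h
    exact B.symm_iff.mpr (B.leftRooted_riso.trans ((rq_eq_iff.mp h).trans
      B.rightRooted_riso.symm))
  · intro h
    have hr : RIso B.G₁ B.G₂ B.u B.v := B.symm_iff.mp h
    exact rq_eq_iff.mpr (B.leftRooted_riso.symm.trans (hr.trans B.rightRooted_riso))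

/-- The standard equivalence doubling `Fin (2^i)`. -/
def doubleEquiv (i : ℕ) : (Fin (2 ^ i) ⊕ Fin (2 ^ i)) ≃ Fin (2 ^ (i + 1)) :=
  finSumFinEquiv.trans (finCongr (by rw [pow_succ, mul_two]))

/-- The join of two rooted graphs on `Fin (2^i)`, realized on `Fin (2^(i+1))`. -/
def joinFin (H₁ H₂ : SimpleGraph (Fin (2 ^ i))) (r₁ r₂ : Fin (2 ^ i)) :
    SimpleGraph (Fin (2 ^ (i + 1))) :=
  transportGraph (joinGraph H₁ H₂ r₁ r₂) (doubleEquiv i)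

/-- The canonical decomposition of `joinFin`. -/
def joinFinBisec (H₁ H₂ : SimpleGraph (Fin (2 ^ i))) (r₁ r₂ : Fin (2 ^ i))
    (hb₁ : IsBisectable i H₁) (hb₂ : IsBisectable i H₂) :
    Bisec i (joinFin H₁ H₂ r₁ r₂) where
  V₁ := Fin (2 ^ i)
  V₂ := Fin (2 ^ i)
  h₁ := inferInstance
  h₂ := inferInstance
  G₁ := H₁
  G₂ := H₂
  u := r₁
  v := r₂
  e := (doubleEquiv i).symm
  he := fun _ _ => Iff.rfl
  b₁ := hb₁
  b₂ := hb₂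

theorem isBisectable_joinFin {H₁ H₂ : SimpleGraph (Fin (2 ^ i))} {r₁ r₂ : Fin (2 ^ i)}
    (hb₁ : IsBisectable i H₁) (hb₂ : IsBisectable i H₂) :
    IsBisectable (i + 1) (joinFin H₁ H₂ r₁ r₂) :=
  isBisectable_succ_iff.mpr ⟨joinFinBisec H₁ H₂ r₁ r₂ hb₁ hb₂⟩

end Aux6
section Aux7

variable {i : ℕ}

/-- Choose a decomposition of a bisectable graph. -/
noncomputable def chooseBisec {V : Type} [Fintype V] {G : SimpleGraph V}
    (h : IsBisectable (i + 1) G) : Bisec i G :=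
  Classical.choice (isBisectable_succ_iff.mp h)

/-- The map sending the class of a symmetric bisectable graph to the class of its half. -/
noncomputable def sHalf (i : ℕ) :
    Quotient (graphIsoSetoid (i + 1)
      (fun G => IsBisectable (i + 1) G ∧ IsSymmetricBisectable (i + 1) G)) → RQ i :=
  Quotient.lift (fun X => rq (chooseBisec X.2.1).leftRooted)
    (by
      rintro X Y ⟨ζ⟩
      exact (chooseBisec X.2.1).left_class_eq_of_symm (chooseBisec Y.2.1) ζ Y.2.2)

theorem sHalf_bijective (i : ℕ) : Function.Bijective (sHalf i) := by
  constructor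
  · intro x y h
    obtain ⟨X, rfl⟩ := Quotient.exists_rep x
    obtain ⟨Y, rfl⟩ := Quotient.exists_rep y
    have h' : rq (chooseBisec X.2.1).leftRooted = rq (chooseBisec Y.2.1).leftRooted := h
    set B := chooseBisec X.2.1
    set C := chooseBisec Y.2.1
    have ρ₁ : RIso B.G₁ C.G₁ B.u C.u := Bisec.left_class_exact h'
    have s₁ : RIso B.G₁ B.G₂ B.u B.v := B.symm_iff.mp X.2.2
    have s₂ : RIso C.G₁ C.G₂ C.u C.v := C.symm_iff.mp Y.2.2
    have ρ₂ : RIso B.G₂ C.G₂ B.v C.v := (s₁.symm.trans ρ₁).trans s₂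
    obtain ⟨ρ₁', hρ₁⟩ := ρ₁
    obtain ⟨ρ₂', hρ₂⟩ := ρ₂
    exact Quotient.sound ⟨B.iso.trans ((joinGraphIso ρ₁' ρ₂' hρ₁ hρ₂).trans C.iso.symm)⟩
  · intro q
    obtain ⟨X0, rfl⟩ := Quotient.exists_rep q
    obtain ⟨⟨Hg, r⟩, hb⟩ := X0
    set Bd := joinFinBisec Hg Hg r r hb hb with hBddef
    have hsym : IsSymmetricBisectable (i + 1) (joinFin Hg Hg r r) :=
      Bd.symm_iff.mpr ⟨Iso.refl, rfl⟩
    refine ⟨Quotient.mk _ ⟨joinFin Hg Hg r r, isBisectable_joinFin hb hb, hsym⟩, ?_⟩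
    have h1 : rq (chooseBisec (isBisectable_joinFin hb hb)).leftRooted = rq Bd.leftRooted :=
      (chooseBisec _).left_class_eq_of_symm Bd Iso.refl hsym
    have h2 : rq Bd.leftRooted = Quotient.mk (rootedSetoid i) ⟨(Hg, r), hb⟩ :=
      Quotient.sound (Bd.leftRooted_riso.symm : RIso Bd.leftRooted.1.1 Hg Bd.leftRooted.1.2 r)
    exact h1.trans h2

/-- The map sending the class of an asymmetric bisectable graph to the unordered pair of
the classes of its two halves. -/
noncomputable def aPair (i : ℕ) :
    Quotient (graphIsoSetoid (i + 1)
      (fun G => IsBisectable (i + 1) G ∧ ¬IsSymmetricBisectable (i + 1) G)) →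
      {z : Sym2 (RQ i) // ¬z.IsDiag} :=
  Quotient.lift (fun X =>
    ⟨s(rq (chooseBisec X.2.1).leftRooted, rq (chooseBisec X.2.1).rightRooted), by
      rw [Sym2.mk_isDiag_iff]
      intro hd
      exact X.2.2 ((chooseBisec X.2.1).left_eq_right_iff_symm.mp hd)⟩)
    (by
      rintro X Y ⟨ζ⟩
      exact Subtype.ext ((chooseBisec X.2.1).pair_eq_sym2 (chooseBisec Y.2.1) ζ))

theorem aPair_bijective (i : ℕ) : Function.Bijective (aPair i) := by
  constructor
  · intro x y h
    obtain ⟨X, rfl⟩ := Quotient.exists_rep x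
    obtain ⟨Y, rfl⟩ := Quotient.exists_rep y
    have h' : (s(rq (chooseBisec X.2.1).leftRooted, rq (chooseBisec X.2.1).rightRooted)
        : Sym2 (RQ i)) =
        s(rq (chooseBisec Y.2.1).leftRooted, rq (chooseBisec Y.2.1).rightRooted) :=
      congrArg Subtype.val h
    set B := chooseBisec X.2.1
    set C := chooseBisec Y.2.1
    rw [Sym2.eq_iff] at h'
    rcases h' with ⟨hl, hr⟩ | ⟨hl, hr⟩
    · obtain ⟨ρ₁', hρ₁⟩ := Bisec.left_class_exact hl
      obtain ⟨ρ₂', hρ₂⟩ := Bisec.right_class_exact hr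
      exact Quotient.sound ⟨B.iso.trans ((joinGraphIso ρ₁' ρ₂' hρ₁ hρ₂).trans C.iso.symm)⟩
    · obtain ⟨ρ₁', hρ₁⟩ := Bisec.lr_class_exact hl
      obtain ⟨ρ₂', hρ₂⟩ := Bisec.rl_class_exact hr
      exact Quotient.sound ⟨B.iso.trans ((joinGraphIso ρ₁' ρ₂' hρ₁ hρ₂).trans
        ((joinGraphComm C.G₂ C.G₁ C.v C.u).trans C.iso.symm))⟩
  · rintro ⟨zz, hnd⟩
    revert hnd
    refine Sym2.inductionOn zz ?_
    intro q₁ q₂ hnd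
    obtain ⟨⟨⟨H₁, r₁⟩, hb₁⟩, rfl⟩ := Quotient.exists_rep q₁
    obtain ⟨⟨⟨H₂, r₂⟩, hb₂⟩, rfl⟩ := Quotient.exists_rep q₂
    have hnd : ¬(Quotient.mk (rootedSetoid i) ⟨(H₁, r₁), hb₁⟩ =
        Quotient.mk (rootedSetoid i) ⟨(H₂, r₂), hb₂⟩) := fun h => hnd (Sym2.mk_isDiag_iff.mpr h)
    set Bd := joinFinBisec H₁ H₂ r₁ r₂ hb₁ hb₂ with hBddef
    have hql : rq Bd.leftRooted = Quotient.mk (rootedSetoid i) ⟨(H₁, r₁), hb₁⟩ :=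
      Quotient.sound (Bd.leftRooted_riso.symm : RIso Bd.leftRooted.1.1 H₁ Bd.leftRooted.1.2 r₁)
    have hqr : rq Bd.rightRooted = Quotient.mk (rootedSetoid i) ⟨(H₂, r₂), hb₂⟩ :=
      Quotient.sound (Bd.rightRooted_riso.symm : RIso Bd.rightRooted.1.1 H₂ Bd.rightRooted.1.2 r₂)
    have hnsym : ¬IsSymmetricBisectable (i + 1) (joinFin H₁ H₂ r₁ r₂) := by
      intro hs
      have := Bd.left_eq_right_iff_symm.mpr hs
      rw [hql, hqr] at this
      exact hnd this
    refine ⟨Quotient.mk _ ⟨joinFin H₁ H₂ r₁ r₂, isBisectable_joinFin hb₁ hb₂, hnsym⟩, ?_⟩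
    apply Subtype.ext
    show (s(rq (chooseBisec (isBisectable_joinFin hb₁ hb₂)).leftRooted,
      rq (chooseBisec (isBisectable_joinFin hb₁ hb₂)).rightRooted) : Sym2 (RQ i)) = _
    rw [(chooseBisec (isBisectable_joinFin hb₁ hb₂)).pair_eq_sym2 Bd Iso.refl, hql, hqr]

theorem sCount_succ (i : ℕ) : sCount (i + 1) = Nat.card (RQ i) :=
  Nat.card_eq_of_bijective (sHalf i) (sHalf_bijective i)

theorem aCount_succ (i : ℕ) : aCount (i + 1) = (Nat.card (RQ i)).choose 2 := by
  have h1 : aCount (i + 1) = Nat.card {z : Sym2 (RQ i) // ¬z.IsDiag} :=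
    Nat.card_eq_of_bijective (aPair i) (aPair_bijective i)
  classical
  letI : Fintype (RQ i) := Fintype.ofFinite _
  rw [h1, Nat.card_eq_fintype_card, Nat.card_eq_fintype_card, Sym2.card_subtype_not_diag]

end Aux7
section Aux8

variable {i : ℕ}

theorem Bisec.swap_invol {V : Type} [Fintype V] {G : SimpleGraph V} (B : Bisec i G)
    (σ : G ≃g G) (hσ : B.IsSwap σ) (y : V) : σ (σ y) = y := by
  have hfix : (σ.trans σ) B.a = B.a := by
    show σ (σ B.a) = B.a
    rw [(B.swap_maps σ hσ).1, (B.swap_maps σ hσ).2]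
  exact rigid (i + 1) G (isBisectable_succ_iff.mpr ⟨B⟩) (σ.trans σ) B.a hfix y

/-- The classes of asymmetric bisectable graphs. -/
abbrev AQt (i : ℕ) := Quotient (graphIsoSetoid i
  (fun G => IsBisectable i G ∧ ¬IsSymmetricBisectable i G))

/-- The classes of symmetric bisectable graphs. -/
abbrev SQt (i : ℕ) := Quotient (graphIsoSetoid i
  (fun G => IsBisectable i G ∧ IsSymmetricBisectable i G))

/-- The classifying function on representatives. -/
noncomputable def classifyFun (i : ℕ) (X : Rooted i) : AQt i ⊕ SQt i :=
  @dite _ (IsSymmetricBisectable i X.1.1) (Classical.dec _)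
    (fun hs => Sum.inr (Quotient.mk _ ⟨X.1.1, X.2, hs⟩))
    (fun hs => Sum.inl (Quotient.mk _ ⟨X.1.1, X.2, hs⟩))

noncomputable def classify (i : ℕ) : RQ i → AQt i ⊕ SQt i :=
  Quotient.lift (classifyFun i)
    (by
      intro X Y h
      obtain ⟨ζ, -⟩ := (h : RIso X.1.1 Y.1.1 X.1.2 Y.1.2)
      unfold classifyFun
      by_cases hs : IsSymmetricBisectable i X.1.1
      · have hs' : IsSymmetricBisectable i Y.1.1 := isSymmetricBisectable_congr ζ.symm hs
        rw [dif_pos hs, dif_pos hs']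
        exact congrArg _ (Quotient.sound ⟨ζ⟩)
      · have hs' : ¬IsSymmetricBisectable i Y.1.1 := fun hy =>
          hs (isSymmetricBisectable_congr ζ hy)
        rw [dif_neg hs, dif_neg hs']
        exact congrArg _ (Quotient.sound ⟨ζ⟩))

theorem classify_mk_pos (X : Rooted i) (hs : IsSymmetricBisectable i X.1.1) :
    classify i (Quotient.mk (rootedSetoid i) X) = Sum.inr (Quotient.mk _ ⟨X.1.1, X.2, hs⟩) := by
  show classifyFun i X = _
  unfold classifyFun
  rw [dif_pos hs]

theorem classify_mk_neg (X : Rooted i) (hs : ¬IsSymmetricBisectable i X.1.1) :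
    classify i (Quotient.mk (rootedSetoid i) X) = Sum.inl (Quotient.mk _ ⟨X.1.1, X.2, hs⟩) := by
  show classifyFun i X = _
  unfold classifyFun
  rw [dif_neg hs]

theorem nat_card_eq_card_mul {α β : Type} [Finite α] [Finite β] (f : α → β) (k : ℕ)
    (hf : ∀ b, Nat.card {a // f a = b} = k) : Nat.card α = Nat.card β * k := by
  classical
  letI := Fintype.ofFinite α
  letI := Fintype.ofFinite β
  letI : ∀ b, Fintype {a // f a = b} := fun b => Fintype.ofFinite _
  calc Nat.card α = Nat.card (Σ b, {a // f a = b}) :=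
        (Nat.card_congr (Equiv.sigmaFiberEquiv f)).symm
    _ = Fintype.card (Σ b, {a // f a = b}) := Nat.card_eq_fintype_card
    _ = ∑ b, Fintype.card {a // f a = b} := Fintype.card_sigma
    _ = ∑ _b : β, k := by
        refine Finset.sum_congr rfl fun b _ => ?_
        rw [← Nat.card_eq_fintype_card, hf]
    _ = Fintype.card β * k := by rw [Finset.sum_const, Finset.card_univ, smul_eq_mul]
    _ = Nat.card β * k := by rw [Nat.card_eq_fintype_card]

theorem fiber_asym (j : ℕ)
    (Y : {G : SimpleGraph (Fin (2 ^ (j + 1))) //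
      IsBisectable (j + 1) G ∧ ¬IsSymmetricBisectable (j + 1) G}) :
    Nat.card {x : RQ (j + 1) // classify (j + 1) x = Sum.inl (Quotient.mk _ Y)} =
      2 ^ (j + 1) := by
  have hm : ∀ v : Fin (2 ^ (j + 1)),
      classify (j + 1) (Quotient.mk (rootedSetoid (j + 1)) ⟨(Y.1, v), Y.2.1⟩) = Sum.inl (Quotient.mk _ Y) := by
    intro v
    rw [classify_mk_neg ⟨(Y.1, v), Y.2.1⟩ Y.2.2]
  set m : Fin (2 ^ (j + 1)) →
      {x : RQ (j + 1) // classify (j + 1) x = Sum.inl (Quotient.mk _ Y)} :=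
    fun v => ⟨Quotient.mk (rootedSetoid (j + 1)) ⟨(Y.1, v), Y.2.1⟩, hm v⟩ with hmdef
  have hbij : Function.Bijective m := by
    constructor
    · intro v w hvw
      have h' : rq (⟨(Y.1, v), Y.2.1⟩ : Rooted (j + 1)) = Quotient.mk (rootedSetoid (j + 1)) ⟨(Y.1, w), Y.2.1⟩ :=
        congrArg Subtype.val hvw
      obtain ⟨φ, hφ⟩ := rq_eq_iff.mp h'
      have hφ' : φ v = w := hφ
      set B := chooseBisec Y.2.1 with hBdef
      rcases B.swap_or_id φ with hid | hsw
      · rw [← hφ', hid v]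
      · exfalso
        obtain ⟨ρ, hρ⟩ := B.swap_rooted φ hsw
        exact Y.2.2 (B.symm_iff.mpr ⟨ρ, hρ⟩)
    · rintro ⟨x, hx⟩
      obtain ⟨⟨⟨H', r'⟩, hb'⟩, rfl⟩ := Quotient.exists_rep x
      by_cases hs : IsSymmetricBisectable (j + 1) H'
      · exfalso
        rw [classify_mk_pos ⟨(H', r'), hb'⟩ hs] at hx
        exact absurd hx (by simp)
      · rw [classify_mk_neg ⟨(H', r'), hb'⟩ hs] at hx
        obtain ⟨ζ⟩ := Quotient.exact (Sum.inl_injective hx)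
        refine ⟨ζ r', Subtype.ext ?_⟩
        show Quotient.mk (rootedSetoid (j + 1)) ⟨(Y.1, ζ r'), Y.2.1⟩ = Quotient.mk (rootedSetoid (j + 1)) ⟨(H', r'), hb'⟩
        exact (rq_eq_iff.mpr ⟨ζ, rfl⟩).symm
  calc Nat.card {x : RQ (j + 1) // classify (j + 1) x = Sum.inl (Quotient.mk _ Y)}
      = Nat.card (Fin (2 ^ (j + 1))) := (Nat.card_eq_of_bijective m hbij).symm
    _ = 2 ^ (j + 1) := by rw [Nat.card_eq_fintype_card, Fintype.card_fin]

theorem fiber_symm (j : ℕ)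
    (Y : {G : SimpleGraph (Fin (2 ^ (j + 1))) //
      IsBisectable (j + 1) G ∧ IsSymmetricBisectable (j + 1) G}) :
    Nat.card {x : RQ (j + 1) // classify (j + 1) x = Sum.inr (Quotient.mk _ Y)} = 2 ^ j := by
  set B := chooseBisec Y.2.1 with hBdef
  have hsr : RIso B.G₁ B.G₂ B.u B.v := B.symm_iff.mp Y.2.2
  obtain ⟨ρ, hρ⟩ := hsr
  obtain ⟨σ, hσ⟩ := B.rooted_swap ρ hρ
  have hinv : ∀ y, σ (σ y) = y := B.swap_invol σ hσ
  have hm : ∀ v : Fin (2 ^ (j + 1)),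
      classify (j + 1) (Quotient.mk (rootedSetoid (j + 1)) ⟨(Y.1, v), Y.2.1⟩) = Sum.inr (Quotient.mk _ Y) := by
    intro v
    rw [classify_mk_pos ⟨(Y.1, v), Y.2.1⟩ Y.2.2]
  set m : Fin (2 ^ (j + 1)) →
      {x : RQ (j + 1) // classify (j + 1) x = Sum.inr (Quotient.mk _ Y)} :=
    fun v => ⟨Quotient.mk (rootedSetoid (j + 1)) ⟨(Y.1, v), Y.2.1⟩, hm v⟩ with hmdef
  have hsurj : Function.Surjective m := by
    rintro ⟨x, hx⟩
    obtain ⟨⟨⟨H', r'⟩, hb'⟩, rfl⟩ := Quotient.exists_rep x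
    by_cases hs : IsSymmetricBisectable (j + 1) H'
    · rw [classify_mk_pos ⟨(H', r'), hb'⟩ hs] at hx
      obtain ⟨ζ⟩ := Quotient.exact (Sum.inr_injective hx)
      refine ⟨ζ r', Subtype.ext ?_⟩
      show Quotient.mk (rootedSetoid (j + 1)) ⟨(Y.1, ζ r'), Y.2.1⟩ = Quotient.mk (rootedSetoid (j + 1)) ⟨(H', r'), hb'⟩
      exact (rq_eq_iff.mpr ⟨ζ, rfl⟩).symm
    · exfalso
      rw [classify_mk_neg ⟨(H', r'), hb'⟩ hs] at hx
      exact absurd hx (by simp)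
  have hfib : ∀ w : Fin (2 ^ (j + 1)), Nat.card {v // m v = m w} = 2 := by
    intro w
    have hiff : ∀ v, m v = m w ↔ (v = w ∨ v = σ w) := by
      intro v
      constructor
      · intro hvw
        have h' : rq (⟨(Y.1, v), Y.2.1⟩ : Rooted (j + 1)) = Quotient.mk (rootedSetoid (j + 1)) ⟨(Y.1, w), Y.2.1⟩ :=
          congrArg Subtype.val hvw
        obtain ⟨φ, hφ⟩ := rq_eq_iff.mp h'
        have hφ' : φ v = w := hφ
        rcases B.aut_eq_or σ φ hσ with hid | hsw
        · left; rw [← hφ', hid v]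
        · right
          have : σ v = w := by rw [← hsw v, hφ']
          rw [← this, hinv]
      · rintro (rfl | rfl)
        · rfl
        · apply Subtype.ext
          show Quotient.mk (rootedSetoid (j + 1)) ⟨(Y.1, σ w), Y.2.1⟩ = Quotient.mk (rootedSetoid (j + 1)) ⟨(Y.1, w), Y.2.1⟩
          exact rq_eq_iff.mpr ⟨σ, hinv w⟩
    have hcongr := Nat.card_congr (Equiv.subtypeEquivRight hiff)
    rw [hcongr]
    have hset : Nat.card {v // v = w ∨ v = σ w} =
        ({w, σ w} : Set (Fin (2 ^ (j + 1)))).ncard := by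
      rw [← Nat.card_coe_set_eq]
      rfl
    rw [hset, Set.ncard_pair (B.swap_ne σ hσ w).symm]
  have htot := nat_card_eq_card_mul m 2 (by
    intro b
    obtain ⟨w, rfl⟩ := hsurj b
    exact hfib w)
  rw [Nat.card_eq_fintype_card, Fintype.card_fin] at htot
  omega

end Aux8
section Aux9

theorem card_RQ_succ (j : ℕ) :
    Nat.card (RQ (j + 1)) = 2 ^ (j + 1) * aCount (j + 1) + 2 ^ j * sCount (j + 1) := by
  classical
  letI : Fintype (AQt (j + 1)) := Fintype.ofFinite _
  letI : Fintype (SQt (j + 1)) := Fintype.ofFinite _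
  letI : Fintype (RQ (j + 1)) := Fintype.ofFinite _
  letI : ∀ c : AQt (j + 1) ⊕ SQt (j + 1),
      Fintype {x : RQ (j + 1) // classify (j + 1) x = c} := fun c => Fintype.ofFinite _
  have h1 : Nat.card (RQ (j + 1)) =
      ∑ c : AQt (j + 1) ⊕ SQt (j + 1), Nat.card {x // classify (j + 1) x = c} := by
    calc Nat.card (RQ (j + 1))
        = Nat.card (Σ c, {x // classify (j + 1) x = c}) :=
          (Nat.card_congr (Equiv.sigmaFiberEquiv _)).symm
      _ = Fintype.card (Σ c, {x // classify (j + 1) x = c}) := Nat.card_eq_fintype_card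
      _ = ∑ c, Fintype.card {x // classify (j + 1) x = c} := Fintype.card_sigma
      _ = ∑ c, Nat.card {x // classify (j + 1) x = c} := by
          simp [Nat.card_eq_fintype_card]
  have hA : ∀ a : AQt (j + 1), Nat.card {x // classify (j + 1) x = Sum.inl a} = 2 ^ (j + 1) := by
    intro a
    obtain ⟨Y, rfl⟩ := Quotient.exists_rep a
    exact fiber_asym j Y
  have hS : ∀ s : SQt (j + 1), Nat.card {x // classify (j + 1) x = Sum.inr s} = 2 ^ j := by
    intro s
    obtain ⟨Y, rfl⟩ := Quotient.exists_rep s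
    exact fiber_symm j Y
  have haC : aCount (j + 1) = Fintype.card (AQt (j + 1)) :=
    Nat.card_eq_fintype_card
  have hsC : sCount (j + 1) = Fintype.card (SQt (j + 1)) :=
    Nat.card_eq_fintype_card
  rw [h1, Fintype.sum_sum_type]
  calc (∑ a : AQt (j + 1), Nat.card {x // classify (j + 1) x = Sum.inl a}) +
        ∑ s : SQt (j + 1), Nat.card {x // classify (j + 1) x = Sum.inr s}
      = (∑ _a : AQt (j + 1), 2 ^ (j + 1)) + ∑ _s : SQt (j + 1), 2 ^ j := by
        rw [Finset.sum_congr rfl fun a _ => hA a, Finset.sum_congr rfl fun s _ => hS s]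
    _ = Fintype.card (AQt (j + 1)) * 2 ^ (j + 1) + Fintype.card (SQt (j + 1)) * 2 ^ j := by
        rw [Finset.sum_const, Finset.card_univ, smul_eq_mul,
          Finset.sum_const, Finset.card_univ, smul_eq_mul]
    _ = 2 ^ (j + 1) * aCount (j + 1) + 2 ^ j * sCount (j + 1) := by
        rw [haC, hsC, mul_comm, mul_comm (Fintype.card (SQt (j + 1)))]

theorem card_RQ_zero : Nat.card (RQ 0) = 1 := by
  have hss : ∀ a b : Fin (2 ^ 0), a = b := fun a b => Fin.ext (by omega)
  have hadj : ∀ (Gr : SimpleGraph (Fin (2 ^ 0))) (a b : Fin (2 ^ 0)), ¬Gr.Adj a b := by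
    intro Gr a b h
    have hab := hss a b
    subst hab
    exact Gr.irrefl h
  rw [Nat.card_eq_one_iff_unique]
  constructor
  · constructor
    intro a b
    obtain ⟨X, rfl⟩ := Quotient.exists_rep a
    obtain ⟨Y, rfl⟩ := Quotient.exists_rep b
    apply Quotient.sound
    refine ⟨⟨Equiv.refl _, ?_⟩, hss _ _⟩
    intro x y
    exact iff_of_false (hadj _ _ _) (hadj _ _ _)
  · exact ⟨Quotient.mk _ ⟨(⊥, ⟨0, by norm_num⟩),
      show Fintype.card (Fin (2 ^ 0)) = 1 by simp⟩⟩

/-- Merge asymmetric and symmetric classes into all classes. -/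
noncomputable def dMerge (i : ℕ) : AQt i ⊕ SQt i →
    Quotient (graphIsoSetoid i (fun G => IsBisectable i G)) :=
  Sum.elim
    (Quotient.lift (fun X => Quotient.mk _ ⟨X.1, X.2.1⟩)
      (by rintro X Y ⟨ζ⟩; exact Quotient.sound ⟨ζ⟩))
    (Quotient.lift (fun X => Quotient.mk _ ⟨X.1, X.2.1⟩)
      (by rintro X Y ⟨ζ⟩; exact Quotient.sound ⟨ζ⟩))

theorem dMerge_bijective (i : ℕ) : Function.Bijective (dMerge i) := by
  constructor
  · rintro (a | a) (b | b) h
    · obtain ⟨X, rfl⟩ := Quotient.exists_rep a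
      obtain ⟨Y, rfl⟩ := Quotient.exists_rep b
      obtain ⟨ζ⟩ := Quotient.exact (h :
        (Quotient.mk _ ⟨X.1, X.2.1⟩ : Quotient (graphIsoSetoid i _)) = Quotient.mk _ ⟨Y.1, Y.2.1⟩)
      exact congrArg Sum.inl (Quotient.sound ⟨ζ⟩)
    · obtain ⟨X, rfl⟩ := Quotient.exists_rep a
      obtain ⟨Y, rfl⟩ := Quotient.exists_rep b
      obtain ⟨ζ⟩ := Quotient.exact (h :
        (Quotient.mk _ ⟨X.1, X.2.1⟩ : Quotient (graphIsoSetoid i _)) = Quotient.mk _ ⟨Y.1, Y.2.1⟩)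
      exact absurd (isSymmetricBisectable_congr ζ Y.2.2) X.2.2
    · obtain ⟨X, rfl⟩ := Quotient.exists_rep a
      obtain ⟨Y, rfl⟩ := Quotient.exists_rep b
      obtain ⟨ζ⟩ := Quotient.exact (h :
        (Quotient.mk _ ⟨X.1, X.2.1⟩ : Quotient (graphIsoSetoid i _)) = Quotient.mk _ ⟨Y.1, Y.2.1⟩)
      exact absurd (isSymmetricBisectable_congr ζ.symm X.2.2) Y.2.2
    · obtain ⟨X, rfl⟩ := Quotient.exists_rep a
      obtain ⟨Y, rfl⟩ := Quotient.exists_rep b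
      obtain ⟨ζ⟩ := Quotient.exact (h :
        (Quotient.mk _ ⟨X.1, X.2.1⟩ : Quotient (graphIsoSetoid i _)) = Quotient.mk _ ⟨Y.1, Y.2.1⟩)
      exact congrArg Sum.inr (Quotient.sound ⟨ζ⟩)
  · intro x
    obtain ⟨X, rfl⟩ := Quotient.exists_rep x
    by_cases hs : IsSymmetricBisectable i X.1
    · exact ⟨Sum.inr (Quotient.mk _ ⟨X.1, X.2, hs⟩), rfl⟩
    · exact ⟨Sum.inl (Quotient.mk _ ⟨X.1, X.2, hs⟩), rfl⟩

theorem dCount_eq (i : ℕ) : dCount i = aCount i + sCount i := by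
  have h := Nat.card_eq_of_bijective (dMerge i) (dMerge_bijective i)
  rw [Nat.card_sum] at h
  exact h.symm

end Aux9
/-- The recurrences `s_i = 2^(i-1) a_(i-1) + 2^(i-2) s_(i-1)`, `a_i = C(s_i, 2)`,
`d_i = a_i + s_i`, and the resulting count `d_4 = 136`. -/
theorem bisectable_recurrences :
    (∀ i : ℕ, 2 ≤ i →
      sCount i = 2 ^ (i - 1) * aCount (i - 1) + 2 ^ (i - 2) * sCount (i - 1)) ∧
    (∀ i : ℕ, 1 ≤ i → aCount i = Nat.choose (sCount i) 2) ∧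
    (∀ i : ℕ, 1 ≤ i → dCount i = aCount i + sCount i) ∧
    dCount 4 = 136 := by
  have hsucc2 : ∀ j : ℕ, sCount (j + 2) =
      2 ^ (j + 1) * aCount (j + 1) + 2 ^ j * sCount (j + 1) := by
    intro j
    rw [sCount_succ (j + 1), card_RQ_succ j]
  have hach : ∀ j : ℕ, aCount (j + 1) = Nat.choose (sCount (j + 1)) 2 := by
    intro j
    rw [aCount_succ j, sCount_succ j]
  have s1 : sCount 1 = 1 := by rw [sCount_succ 0, card_RQ_zero]
  have a1 : aCount 1 = 0 := by rw [hach 0, s1]; decide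
  have s2 : sCount 2 = 1 := by rw [hsucc2 0, a1, s1]; norm_num
  have a2 : aCount 2 = 0 := by rw [hach 1, s2]; decide
  have s3 : sCount 3 = 2 := by rw [hsucc2 1, a2, s2]; norm_num
  have a3 : aCount 3 = 1 := by rw [hach 2, s3]; decide
  have s4 : sCount 4 = 16 := by rw [hsucc2 2, a3, s3]; norm_num
  have a4 : aCount 4 = 120 := by rw [hach 3, s4]; decide
  refine ⟨?_, ?_, ?_, ?_⟩
  · intro i hi
    obtain ⟨j, rfl⟩ : ∃ j, i = j + 2 := ⟨i - 2, by omega⟩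
    exact hsucc2 j
  · intro i hi
    obtain ⟨j, rfl⟩ : ∃ j, i = j + 1 := ⟨i - 1, by omega⟩
    exact hach j
  · intro i _
    exact dCount_eq i
  · rw [dCount_eq 4, a4, s4]
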